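/- For every integer τ ≥ 1, the real part of (1/(2π)) ∫_{-π}^{π} [(1 + cos k)/(τ + 4 + τ cos k)] · (2/(1+e^{-ik}))² dk equals 2/τ − (τ+4)√(2τ+4)/(2τ(τ+2)). -/

import Mathlib

open Real intervalIntegral

/-!
Since `(1 + e^{-ik})² = 2 (1 + cos k) e^{-ik}`, the factor `1 + cos k` cancels and the
integrand becomes `2 e^{ik} / (τ + 4 + τ cos k)`, whose real part is
`2 cos k / (τ + 4 + τ cos k)`. Writing `cos k / (a + b cos k) = (1 - a / (a + b cos k)) / b`
reduces everything to the classical integral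
`∫_{-π}^{π} dk / (a + b cos k) = 2π / √(a² - b²)` for `|b| < a`, here with `a² - b² = 8τ + 16`.
-/

theorem add_mul_cos_pos {a b : ℝ} (hab : |b| < a) (x : ℝ) : 0 < a + b * cos x := by
  have : |b * cos x| ≤ |b| := by
    rw [abs_mul]; exact mul_le_of_le_one_right (abs_nonneg b) (abs_cos_le_one x)
  linarith [neg_abs_le (b * cos x)]

theorem one_add_cos_pos {x : ℝ} (hx : x ∈ Set.Ioo (-π) π) : 0 < 1 + cos x := by
  have h : 0 < cos (x / 2) := cos_pos_of_mem_Ioo ⟨by linarith [hx.1], by linarith [hx.2]⟩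
  rw [cos_half hx.1.le hx.2.le, sqrt_pos] at h
  linarith

/-- Unlike the textbook primitive through `tan (x / 2)`, this one is smooth on all of `ℝ`, so the
fundamental theorem of calculus applies on `[-π, π]` directly. -/
theorem hasDerivAt_one_div_add_mul_cos_primitive {a b : ℝ} (hab : |b| < a) (x : ℝ) :
    HasDerivAt (fun x : ℝ =>
        (x - 2 * arctan (b * sin x / (a + √(a ^ 2 - b ^ 2) + b * cos x))) / √(a ^ 2 - b ^ 2))
      (1 / (a + b * cos x)) x := by
  set c := √(a ^ 2 - b ^ 2)
  have hsq : 0 < a ^ 2 - b ^ 2 := by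
    have := sq_abs b; nlinarith [abs_nonneg b]
  have hc2 : c ^ 2 = a ^ 2 - b ^ 2 := sq_sqrt hsq.le
  have hc : 0 < c := sqrt_pos.mpr hsq
  have hD : 0 < a + b * cos x := add_mul_cos_pos hab x
  have hac : 0 < a + c := by linarith [abs_nonneg b]
  have hE : ∀ y, 0 < a + c + b * cos y := add_mul_cos_pos (by linarith)
  have hquot : HasDerivAt (fun y => b * sin y / (a + c + b * cos y))
      ((b * cos x * (a + c + b * cos x) - b * sin x * (b * -sin x)) / (a + c + b * cos x) ^ 2) x :=
    ((hasDerivAt_sin x).const_mul b).div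
      (((hasDerivAt_cos x).const_mul b).const_add (a + c)) (hE x).ne'
  refine (((hasDerivAt_id' x).sub (hquot.arctan.const_mul 2)).div_const c).congr_deriv ?_
  have hsc := sin_sq_add_cos_sq x
  have hE0 := (hE x).ne'
  have h1u : 1 + (b * sin x / (a + c + b * cos x)) ^ 2 =
      2 * (a + c) * (a + b * cos x) / (a + c + b * cos x) ^ 2 := by
    field_simp
    linear_combination b ^ 2 * hsc + hc2
  rw [h1u]
  field_simp
  linear_combination -hc2 - b ^ 2 * hsc

theorem integral_one_div_add_mul_cos {a b : ℝ} (hab : |b| < a) :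
    ∫ x in (-π)..π, 1 / (a + b * cos x) = 2 * π / √(a ^ 2 - b ^ 2) := by
  have hcont : Continuous fun x => 1 / (a + b * cos x) :=
    continuous_const.div (by fun_prop) fun x => (add_mul_cos_pos hab x).ne'
  rw [integral_eq_sub_of_hasDerivAt (fun x _ => hasDerivAt_one_div_add_mul_cos_primitive hab x)
    (hcont.intervalIntegrable _ _)]
  simp only [sin_pi, sin_neg, mul_zero, neg_zero, zero_div, arctan_zero]
  ring

theorem integral_cos_div_add_mul_cos {a b : ℝ} (hb : b ≠ 0) (hab : |b| < a) :
    ∫ x in (-π)..π, cos x / (a + b * cos x) = 2 * π / b * (1 - a / √(a ^ 2 - b ^ 2)) := by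
  have hD := add_mul_cos_pos hab
  have hsplit : (fun x => cos x / (a + b * cos x)) =
      fun x => (1 - a * (1 / (a + b * cos x))) / b := by
    funext x
    rw [mul_one_div, one_sub_div (hD x).ne']
    field_simp
    ring
  have hint : IntervalIntegrable (fun x => 1 / (a + b * cos x)) MeasureTheory.volume (-π) π :=
    (continuous_const.div (by fun_prop) fun x => (hD x).ne').intervalIntegrable _ _
  rw [hsplit, integral_div, integral_sub intervalIntegrable_const (hint.const_mul a),
    integral_const_mul, integral_one_div_add_mul_cos hab, integral_const, smul_eq_mul]
  field_simp
  ring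

theorem sq_two_div_one_add_exp_neg_mul_I {x : ℝ} (hx : 1 + cos x ≠ 0) :
    (2 / (1 + Complex.exp (-(Complex.I * x)))) ^ 2 =
      2 * Complex.exp (x * Complex.I) / ((1 + cos x : ℝ) : ℂ) := by
  have hcos := Complex.two_cos x
  rw [neg_mul, Complex.exp_neg] at hcos
  rw [mul_comm Complex.I, Complex.exp_neg]
  set w := Complex.exp (x * Complex.I)
  have hw : w ≠ 0 := Complex.exp_ne_zero _
  have hcos' : ((1 + cos x : ℝ) : ℂ) = (w + 1) ^ 2 / (2 * w) := by
    push_cast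
    field_simp
    linear_combination w * hcos + mul_inv_cancel₀ hw
  have hw1 : w + 1 ≠ 0 := by
    rintro h
    exact hx (Complex.ofReal_eq_zero.mp (by simp [hcos', h]))
  rw [hcos']
  field_simp

theorem integral_one_add_cos_div_mul_sq_two_div_one_add_exp (a b : ℝ) :
    ∫ k in (-π)..π, (((1 + cos k) / (a + b * cos k) : ℝ) : ℂ) *
        (2 / (1 + Complex.exp (-(Complex.I * k)))) ^ 2 =
      ∫ k in (-π)..π, ((2 / (a + b * cos k) : ℝ) : ℂ) * Complex.exp (k * Complex.I) := by
  -- At `k = π` the left integrand is the junk value `0` (division by `1 + e^{-iπ} = 0`).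
  have hπ : -π ≤ π := neg_le_self pi_pos.le
  rw [integral_of_le hπ, integral_of_le hπ, MeasureTheory.integral_Ioc_eq_integral_Ioo,
    MeasureTheory.integral_Ioc_eq_integral_Ioo]
  refine MeasureTheory.setIntegral_congr_fun measurableSet_Ioo fun k hk => ?_
  have h1 := (one_add_cos_pos hk).ne'
  rw [sq_two_div_one_add_exp_neg_mul_I h1]
  replace h1 : ((1 + cos k : ℝ) : ℂ) ≠ 0 := Complex.ofReal_ne_zero.mpr h1
  push_cast at h1 ⊢
  rw [div_mul_div_comm, mul_comm (1 + _), mul_div_mul_right _ _ h1, mul_div_right_comm]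

theorem re_integral_two_div_add_mul_cos_mul_exp {a b : ℝ} (hb : b ≠ 0) (hab : |b| < a) :
    (∫ k in (-π)..π, ((2 / (a + b * cos k) : ℝ) : ℂ) * Complex.exp (k * Complex.I)).re =
      4 * π / b * (1 - a / √(a ^ 2 - b ^ 2)) := by
  have hcont : Continuous fun k : ℝ =>
      ((2 / (a + b * cos k) : ℝ) : ℂ) * Complex.exp (k * Complex.I) := by
    have : Continuous fun k : ℝ => 2 / (a + b * cos k) :=
      continuous_const.div (by fun_prop) fun k => (add_mul_cos_pos hab k).ne'
    fun_prop
  rw [← RCLike.re_to_complex, ← intervalIntegral_re (hcont.intervalIntegrable _ _)]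
  simp only [RCLike.re_to_complex, Complex.re_ofReal_mul, Complex.exp_ofReal_mul_I_re,
    div_mul_eq_mul_div, mul_div_assoc]
  rw [integral_const_mul, integral_cos_div_add_mul_cos hb hab]
  ring

theorem stmt_3 (τ : ℤ) (hτ : 1 ≤ τ) :
    ((1 / (2 * π) : ℂ) * ∫ k in (-π)..π,
        (((1 + Real.cos k) / ((τ : ℝ) + 4 + (τ : ℝ) * Real.cos k) : ℝ) : ℂ) *
          (2 / (1 + Complex.exp (-(Complex.I * (k : ℂ))))) ^ 2).re
      = 2 / (τ : ℝ) -
          ((τ : ℝ) + 4) * Real.sqrt (2 * (τ : ℝ) + 4) / (2 * (τ : ℝ) * ((τ : ℝ) + 2)) := by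
  set t : ℝ := (τ : ℝ)
  have ht : 0 < t := Int.cast_pos.mpr hτ
  have hab : |t| < t + 4 := by rw [abs_of_pos ht]; linarith
  rw [integral_one_add_cos_div_mul_sq_two_div_one_add_exp,
    show (1 / (2 * π) : ℂ) = ((1 / (2 * π) : ℝ) : ℂ) by push_cast; rfl, Complex.re_ofReal_mul,
    re_integral_two_div_add_mul_cos_mul_exp ht.ne' hab,
    show (t + 4) ^ 2 - t ^ 2 = 2 ^ 2 * (2 * t + 4) by ring, sqrt_mul' _ (by positivity),
    sqrt_sq zero_le_two]
  have hs : √(2 * t + 4) ^ 2 = 2 * t + 4 := sq_sqrt (by positivity)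
  have hs0 : 0 < √(2 * t + 4) := sqrt_pos.mpr (by positivity)
  field_simp
  linear_combination 2 * (t + 4) * hs
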